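/- arXiv:1011.2769 — 2 statements merged into one kernel-verified Lean document; each statement's English description precedes it below -/
import Mathlib

section
/- Let U be a subgroup of the unit circle {z ∈ ℂ : |z| = 1} with −1 ∈ U and with at least 6 elements. Then −1 ∈ R(U), and R(U) is closed under additive inverses: if p ∈ R(U), then −p ∈ R(U). -/
/-- The antisymmetric bracket `⟨x,y⟩ = x·conj(y) − conj(x)·y`. -/
noncomputable def sbr (x y : ℂ) : ℂ :=
  x * (starRingEnd ℂ) y - (starRingEnd ℂ) x * y

/-- The intersection point `I_{u,v}(p,q)` of the lines `L_u(p)` and `L_v(q)`. -/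
noncomputable def Iop (u v p q : ℂ) : ℂ :=
  (sbr u p / sbr u v) * v + (sbr v q / sbr v u) * u

/-- `origamiPts U` is the smallest subset of `ℂ` containing `0` and `1` that is
closed under `(p,q) ↦ I_{u,v}(p,q)` for all `u, v ∈ U` with `u ≠ ±v`.  This is `R(U)`. -/
inductive origamiPts (U : Set ℂ) : ℂ → Prop
  | zero : origamiPts U 0
  | one : origamiPts U 1
  | inter {u v : ℂ} (hu : u ∈ U) (hv : v ∈ U) (huv : u ≠ v) (huv' : u ≠ -v)
      {p q : ℂ} (hp : origamiPts U p) (hq : origamiPts U q) :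
      origamiPts U (Iop u v p q)

/-!
Since `U` has more than four elements it contains a `u` with `u ^ 4 ≠ 1`. The real number
`2 Re u = u + u⁻¹` satisfies `(2 Re u) u = 1 + u ^ 2`, so three intersections give `1 + u ^ 2`
(lines through `0` along `u` and through `1` along `u ^ 2`), then `u ^ 2` (through `0` along
`u ^ 2` and through `1 + u ^ 2` along `1`), then `-1` (through `0` along `1` and through `u ^ 2`
along `u`). As `p, q ↦ I_{u,v}(p, q)` commutes with negation, induction over `R(U)` shows that
negation preserves `R(U)` once it sends `1` into it.
-/

open ComplexConjugate

theorem Finset.exists_pow_ne_of_lt_card {R : Type*} [CommRing R] [IsDomain R] {n : ℕ}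
    (hn : 0 < n) (a : R) {s : Finset R} (hs : n < s.card) : ∃ x ∈ s, x ^ n ≠ a := by
  classical
  by_contra! h
  have hsub : s ⊆ Polynomial.nthRootsFinset n a := fun x hx =>
    (Polynomial.mem_nthRootsFinset hn a).2 (h x hx)
  have := (Finset.card_le_card hsub).trans
    ((Multiset.toFinset_card_le _).trans (Polynomial.card_nthRoots n a))
  omega

lemma sbr_comm (x y : ℂ) : sbr y x = -sbr x y := by
  simp only [sbr]; ring

lemma sbr_add_ofReal_mul (x y : ℂ) (a : ℝ) : sbr x (y + a * x) = sbr x y := by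
  simp only [sbr, map_add, map_mul, Complex.conj_ofReal]; ring

lemma sbr_ne_zero {u v : ℂ} (hu : ‖u‖ = 1) (hv : ‖v‖ = 1) (huv : u ≠ v) (huv' : u ≠ -v) :
    sbr u v ≠ 0 := by
  have hu0 : u ≠ 0 := by rintro rfl; simp at hu
  have hv0 : v ≠ 0 := by rintro rfl; simp at hv
  rw [sbr, ← Complex.inv_eq_conj hu, ← Complex.inv_eq_conj hv]
  intro h
  have : (u - v) * (u + v) = 0 := by field_simp at h; linear_combination h
  rcases mul_eq_zero.1 this with h | h
  · exact huv (sub_eq_zero.1 h)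
  · exact huv' (eq_neg_of_add_eq_zero_left h)

lemma Iop_eq_of_mem_lines {u v p q x : ℂ} (huv : sbr u v ≠ 0) {a b : ℝ}
    (hp : x = p + a * u) (hq : x = q + b * v) : Iop u v p q = x := by
  have hp' : sbr u p = sbr u x := by rw [hp, sbr_add_ofReal_mul]
  have hq' : sbr v q = sbr v x := by rw [hq, sbr_add_ofReal_mul]
  have hvu : sbr v u ≠ 0 := sbr_comm u v ▸ neg_ne_zero.2 huv
  rw [Iop, hp', hq']
  field_simp
  -- the planar identity `⟨u,x⟩ v - ⟨v,x⟩ u = ⟨u,v⟩ x`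
  simp only [sbr]; ring

lemma Iop_neg (u v p q : ℂ) : Iop u v (-p) (-q) = -Iop u v p q := by
  simp only [Iop, sbr, map_neg]
  ring

namespace origamiPts

variable {U : Set ℂ}

theorem of_mem_lines {u v p q x : ℂ} (hu : u ∈ U) (hv : v ∈ U) (hu1 : ‖u‖ = 1) (hv1 : ‖v‖ = 1)
    (huv : u ≠ v) (huv' : u ≠ -v) (hp : origamiPts U p) (hq : origamiPts U q) {a b : ℝ}
    (hxp : x = p + a * u) (hxq : x = q + b * v) : origamiPts U x :=
  Iop_eq_of_mem_lines (sbr_ne_zero hu1 hv1 huv huv') hxp hxq ▸ inter hu hv huv huv' hp hq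

theorem neg_of_neg_one (hneg : origamiPts U (-1)) {p : ℂ} (hp : origamiPts U p) :
    origamiPts U (-p) := by
  induction hp with
  | zero => simpa using zero
  | one => exact hneg
  | inter hu hv huv huv' _ _ ihp ihq => exact Iop_neg .. ▸ inter hu hv huv huv' ihp ihq

theorem neg_one {u : ℂ} (hone : 1 ∈ U) (hu : u ∈ U) (hu2 : u ^ 2 ∈ U) (hu1 : ‖u‖ = 1)
    (hu4 : u ^ 4 ≠ 1) : origamiPts U (-1) := by
  have hu0 : u ≠ 0 := by rintro rfl; simp at hu1
  have hsq1 : u ^ 2 ≠ 1 := fun h => hu4 (by rw [show u ^ 4 = (u ^ 2) ^ 2 by ring, h, one_pow])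
  have hsq1' : u ^ 2 ≠ -1 := fun h =>
    hu4 (by rw [show u ^ 4 = (u ^ 2) ^ 2 by ring, h]; norm_num)
  have h1 : u ≠ 1 := by rintro rfl; simp at hsq1
  have h1' : u ≠ -1 := by rintro rfl; simp at hsq1
  have hu_sq : u ≠ u ^ 2 := fun h => h1 (by
    rcases mul_eq_zero.1 (show u * (u - 1) = 0 by linear_combination -h) with h | h
    exacts [absurd h hu0, sub_eq_zero.1 h])
  have hu_sq' : u ≠ -u ^ 2 := fun h => h1' (by
    rcases mul_eq_zero.1 (show u * (u + 1) = 0 by linear_combination h) with h | h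
    exacts [absurd h hu0, eq_neg_of_add_eq_zero_left h])
  have hsq_norm : ‖u ^ 2‖ = 1 := by simp [hu1]
  have hre : ((2 * u.re : ℝ) : ℂ) * u = u ^ 2 + 1 := by
    rw [← Complex.add_conj, add_mul, mul_comm (conj u), Complex.mul_conj', hu1]; push_cast; ring
  have h_one_add_sq : origamiPts U (1 + u ^ 2) :=
    of_mem_lines hu hu2 hu1 hsq_norm hu_sq hu_sq' zero one (a := 2 * u.re) (b := 1)
      (by linear_combination -hre) (by push_cast; ring)
  have h_sq : origamiPts U (u ^ 2) :=
    of_mem_lines hu2 hone hsq_norm norm_one hsq1 hsq1' zero h_one_add_sq (a := 1) (b := -1)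
      (by push_cast; ring) (by push_cast; ring)
  exact of_mem_lines hone hu norm_one hu1 h1.symm (fun h => h1' (by linear_combination h)) zero
    h_sq (a := -1) (b := -(2 * u.re)) (by push_cast; ring)
    (by rw [Complex.ofReal_neg]; linear_combination hre)

end origamiPts

theorem stmt_7_general (U : Set ℂ)
    (hsub : ∀ z ∈ U, ‖z‖ = 1)
    (hone : (1 : ℂ) ∈ U)
    (hmul : ∀ a ∈ U, ∀ b ∈ U, a * b ∈ U)
    (hcard : ∃ s : Finset ℂ, ↑s ⊆ U ∧ 6 ≤ s.card)
    : origamiPts U (-1) ∧ ∀ p : ℂ, origamiPts U p → origamiPts U (-p) := by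
  obtain ⟨s, hsU, hs⟩ := hcard
  obtain ⟨u, hus, hu4⟩ := s.exists_pow_ne_of_lt_card four_pos 1 (by omega)
  have hu : u ∈ U := hsU hus
  have hneg : origamiPts U (-1) :=
    origamiPts.neg_one hone hu (sq u ▸ hmul u hu u hu) (hsub u hu) hu4
  exact ⟨hneg, fun _ => hneg.neg_of_neg_one⟩

/-- `-1 ∈ R(U)`, and `R(U)` is closed under additive inverses. -/
theorem stmt_7 (U : Set ℂ)
    (hsub : ∀ z ∈ U, ‖z‖ = 1)
    (hone : (1 : ℂ) ∈ U)
    (hmul : ∀ a ∈ U, ∀ b ∈ U, a * b ∈ U)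
    (hinv : ∀ a ∈ U, a⁻¹ ∈ U)
    (hneg : (-1 : ℂ) ∈ U)
    (hcard : ∃ s : Finset ℂ, ↑s ⊆ U ∧ 6 ≤ s.card)
    : origamiPts U (-1) ∧ ∀ p : ℂ, origamiPts U p → origamiPts U (-p) :=
  stmt_7_general U hsub hone hmul hcard
end

section
/- Let U be a subgroup of the unit circle {z ∈ ℂ : |z| = 1} with −1 ∈ U and with at least 6 elements. Then the product of any two monomials is a monomial: if m, m' ∈ M(U), then m·m' ∈ M(U). -/
/-- `origamiMon U` is the smallest subset of `ℂ` containing `1` that is closed under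
`p ↦ I_{u,v}(p,0)` for all `u, v ∈ U` with `u ≠ ±v`.  Its elements are the monomials `M(U)`. -/
inductive origamiMon (U : Set ℂ) : ℂ → Prop
  | one : origamiMon U 1
  | step {u v : ℂ} (hu : u ∈ U) (hv : v ∈ U) (huv : u ≠ v) (huv' : u ≠ -v)
      {p : ℂ} (hp : origamiMon U p) : origamiMon U (Iop u v p 0)

/-!
Every monomial is a real multiple `r w` of some `w ∈ U`: the coefficient `⟨u,p⟩/⟨u,v⟩` in
`I_{u,v}(p,0)` is a quotient of two purely imaginary numbers. Since `I_{u,v}(p,q)` only involves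
brackets, and `⟨x w, r w y⟩ = r |w|² ⟨x,y⟩`, it commutes with the similarity `z ↦ r w z`. Hence
multiplying by `m = r w` turns a construction step `I_{u,v}(p,0)` into the step
`I_{uw,vw}(mp,0)`, and induction on `m'` finishes the proof.
-/

lemma sbr_mul_right_real_mul (x y w : ℂ) (r : ℝ) :
    sbr (x * w) (r * w * y) = r * Complex.normSq w * sbr x y := by
  simp only [sbr, map_mul, Complex.conj_ofReal, Complex.normSq_eq_conj_mul_self]
  ring

lemma conj_sbr (x y : ℂ) : (starRingEnd ℂ) (sbr x y) = -sbr x y := by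
  simp [sbr]

lemma Iop_zero_right (u v p : ℂ) : Iop u v p 0 = sbr u p / sbr u v * v := by
  simp [Iop, sbr]

lemma Iop_mul_right_real_mul (u v p q w : ℂ) (r : ℝ) :
    Iop (u * w) (v * w) (r * w * p) (r * w * q) = r * w * Iop u v p q := by
  rcases eq_or_ne w 0 with rfl | hw
  · simp [Iop]
  have hN : (Complex.normSq w : ℂ) ≠ 0 := by exact_mod_cast (Complex.normSq_pos.2 hw).ne'
  have hD (x y : ℂ) : sbr (x * w) (y * w) = Complex.normSq w * sbr x y := by
    simp only [sbr, map_mul, Complex.normSq_eq_conj_mul_self]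
    ring
  have hcancel (a b : ℂ) : r * Complex.normSq w * a / (Complex.normSq w * b) = r * (a / b) := by
    rw [mul_comm (r : ℂ), mul_assoc, mul_div_mul_left _ _ hN, mul_div_assoc]
  simp only [Iop, sbr_mul_right_real_mul, hD, hcancel]
  ring

lemma exists_real_mul_of_Iop_zero (u v p : ℂ) : ∃ r : ℝ, Iop u v p 0 = r * v := by
  obtain ⟨r, hr⟩ := Complex.conj_eq_iff_real.1
    (show (starRingEnd ℂ) (sbr u p / sbr u v) = sbr u p / sbr u v by
      rw [map_div₀, conj_sbr, conj_sbr, neg_div_neg_eq])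
  exact ⟨r, by rw [Iop_zero_right, hr]⟩

lemma origamiMon.exists_real_mul {U : Set ℂ} (hone : (1 : ℂ) ∈ U) {m : ℂ} (hm : origamiMon U m) :
    ∃ r : ℝ, ∃ w ∈ U, m = r * w := by
  cases hm with
  | one => exact ⟨1, 1, hone, by simp⟩
  | step _ hv =>
    obtain ⟨r, hr⟩ := exists_real_mul_of_Iop_zero _ _ _
    exact ⟨r, _, hv, hr⟩

theorem stmt_9_general (U : Set ℂ)
    (hsub : ∀ z ∈ U, ‖z‖ = 1)
    (hone : (1 : ℂ) ∈ U)
    (hmul : ∀ a ∈ U, ∀ b ∈ U, a * b ∈ U)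
    {m m' : ℂ} (hm : origamiMon U m) (hm' : origamiMon U m') :
    origamiMon U (m * m') := by
  obtain ⟨r, w, hwU, rfl⟩ := hm.exists_real_mul hone
  have hw : w ≠ 0 := norm_ne_zero_iff.1 (by simp [hsub w hwU])
  induction hm' with
  | one => simpa using hm
  | @step u v hu hv huv huv' p _ ih =>
    rw [← Iop_mul_right_real_mul u v p 0 w r, mul_zero]
    refine .step (hmul _ hu w hwU) (hmul _ hv w hwU) ?_ ?_ ih
    · exact fun h => huv (mul_right_cancel₀ hw h)
    · exact fun h => huv' (mul_right_cancel₀ hw (h.trans (neg_mul _ _).symm))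

/-- The product of two monomials is a monomial. -/
theorem stmt_9 (U : Set ℂ)
    (hsub : ∀ z ∈ U, ‖z‖ = 1)
    (hone : (1 : ℂ) ∈ U)
    (hmul : ∀ a ∈ U, ∀ b ∈ U, a * b ∈ U)
    (hinv : ∀ a ∈ U, a⁻¹ ∈ U)
    (hneg : (-1 : ℂ) ∈ U)
    (hcard : ∃ s : Finset ℂ, ↑s ⊆ U ∧ 6 ≤ s.card)
    {m m' : ℂ} (hm : origamiMon U m) (hm' : origamiMon U m') :
    origamiMon U (m * m') :=
  stmt_9_general U hsub hone hmul hm hm'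
end
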